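/- Suppose β ∈ ℝ^p is s-sparse with support set I, let B = β ⊗ β, and let w_β = β/‖β‖₂ + s^{-1/2}·sign(β). If ũ, ṽ ∈ ℝ^p are supported on the complement of I with ‖ũ‖_∞ ≤ 1 and ‖ṽ‖_∞ ≤ 1, then W = w_β ⊗ w_β + s^{-1/2}·(w_β ⊗ ũ + ṽ ⊗ w_β) is a subgradient of the mixed atomic norm at B: ⟨Wβ, β⟩ = θ_s(β,β) and ⟨Wu, v⟩ ≤ θ_s(u,v) for all u, v ∈ ℝ^p. -/

import Mathlib

open MeasureTheory ProbabilityTheory Finset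

noncomputable section

/-- Vectors in ℝ^p. -/
abbrev Vec (p : ℕ) := Fin p → ℝ

/-- p × p real matrices. -/
abbrev Mat (p : ℕ) := Matrix (Fin p) (Fin p) ℝ

/-- Euclidean (ℓ2) norm. -/
def l2 {p : ℕ} (u : Vec p) : ℝ := Real.sqrt (∑ i, (u i) ^ 2)

/-- ℓ1 norm. -/
def l1 {p : ℕ} (u : Vec p) : ℝ := ∑ i, |u i|

/-- Euclidean inner product. -/
def dotp {p : ℕ} (u v : Vec p) : ℝ := ∑ i, u i * v i

/-- θ_s(u,v) = (‖u‖₂ + s^{-1/2}‖u‖₁)(‖v‖₂ + s^{-1/2}‖v‖₁). -/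
def theta {p : ℕ} (s : ℝ) (u v : Vec p) : ℝ :=
  (l2 u + (Real.sqrt s)⁻¹ * l1 u) * (l2 v + (Real.sqrt s)⁻¹ * l1 v)

/-- Frobenius (Hilbert–Schmidt) inner product. -/
def frob {p : ℕ} (A B : Mat p) : ℝ := ∑ i, ∑ j, A i j * B i j

/-- Frobenius norm. -/
def frobNorm {p : ℕ} (A : Mat p) : ℝ := Real.sqrt (frob A A)

/-- The mixed atomic norm ‖B‖_{Γ_s}. -/
def mixedNorm {p : ℕ} (s : ℝ) (B : Mat p) : ℝ :=
  sInf { t | ∃ (K : ℕ) (u v : Fin K → Vec p),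
    B = ∑ k, Matrix.vecMulVec (u k) (v k) ∧ t = ∑ k, theta s (u k) (v k) }

/-- Dual norm of the mixed atomic norm. -/
def dualMixedNorm {p : ℕ} (s : ℝ) (Z : Mat p) : ℝ :=
  sSup { t | ∃ B : Mat p, mixedNorm s B ≤ 1 ∧ t = frob Z B }

/-- A vector is `s`-sparse if it has at most `s` nonzero entries. -/
def IsSparse {p : ℕ} (s : ℕ) (u : Vec p) : Prop := {i | u i ≠ 0}.ncard ≤ s

/-- Nuclear norm of a real matrix: the sum of its singular values. -/
def nuclearNorm {p : ℕ} (A : Mat p) : ℝ :=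
  ∑ i, Real.sqrt ((Matrix.isHermitian_conjTranspose_mul_self A).eigenvalues i)

/-- Operator (spectral) norm of a real matrix. -/
def opNorm {p : ℕ} (A : Mat p) : ℝ :=
  sSup { t | ∃ u v : Vec p, l2 u ≤ 1 ∧ l2 v ≤ 1 ∧ t = dotp (A.mulVec u) v }

/-- `X` has sub-Gaussian (ψ₂) norm at most `K`: `E exp(X²/K²) ≤ 2`. -/
def HasSubgaussianNorm {Ω : Type*} [MeasurableSpace Ω] (μ : Measure Ω) (X : Ω → ℝ) (K : ℝ) :
    Prop := ∫ ω, Real.exp ((X ω) ^ 2 / K ^ 2) ∂μ ≤ 2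

/-- `W` is a subgradient of the mixed atomic norm `‖·‖_{Γ_s}` at `B`. -/
def InSubdiff {p : ℕ} (s : ℝ) (W B : Mat p) : Prop :=
  ∀ C : Mat p, mixedNorm s B + frob W (C - B) ≤ mixedNorm s C


/-!
With `c = s^{-1/2}`, `⟨Wu, v⟩ = ⟨w, u⟩⟨w, v⟩ + c (⟨ũ, u⟩⟨w, v⟩ + ⟨w, u⟩⟨ṽ, v⟩)`, which is at most
`(|⟨w, u⟩| + c |⟨ũ, u⟩|) (|⟨w, v⟩| + c |⟨ṽ, v⟩|)`. Each factor is bounded by `‖u‖₂ + c ‖u‖₁`: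
Cauchy–Schwarz bounds `⟨β / ‖β‖₂, u⟩` by `‖u‖₂`, and since `sign β` and `ũ` have disjoint supports
and entries of modulus at most one, `|⟨sign β, u⟩| + |⟨ũ, u⟩| ≤ ‖u‖₁`. At `u = v = β` the
perturbation terms vanish and `⟨w, β⟩ = ‖β‖₂ + c ‖β‖₁`.
-/

open Matrix

namespace Real

lemma sign_mul_self_eq_abs (x : ℝ) : sign x * x = |x| := by
  rcases lt_trichotomy x 0 with h | rfl | h
  · rw [sign_of_neg h, abs_of_neg h, neg_one_mul]
  · simp
  · rw [sign_of_pos h, abs_of_pos h, one_mul]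

lemma abs_sign_le_one (x : ℝ) : |sign x| ≤ 1 := by
  rcases sign_apply_eq x with h | h | h <;> simp [h]

end Real

lemma mul_add_mul_cross_le {a₁ a₂ b₁ b₂ c A B : ℝ} (hc : 0 ≤ c)
    (ha : |a₁| + c * |a₂| ≤ A) (hb : |b₁| + c * |b₂| ≤ B) :
    a₁ * b₁ + c * (a₂ * b₁ + a₁ * b₂) ≤ A * B := by
  have h₁ : a₁ * b₁ ≤ |a₁| * |b₁| := (le_abs_self _).trans_eq (abs_mul _ _)
  have h₂ : a₂ * b₁ ≤ |a₂| * |b₁| := (le_abs_self _).trans_eq (abs_mul _ _)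
  have h₃ : a₁ * b₂ ≤ |a₁| * |b₂| := (le_abs_self _).trans_eq (abs_mul _ _)
  calc a₁ * b₁ + c * (a₂ * b₁ + a₁ * b₂)
      ≤ (|a₁| + c * |a₂|) * (|b₁| + c * |b₂|) := by
        nlinarith [mul_le_mul_of_nonneg_left (add_le_add h₂ h₃) hc,
          mul_nonneg (mul_nonneg hc (abs_nonneg a₂)) (mul_nonneg hc (abs_nonneg b₂))]
    _ ≤ A * B := mul_le_mul ha hb (by positivity) (le_trans (by positivity) ha)

section Vectors

variable {p : ℕ}

lemma dotp_eq_dotProduct (u v : Vec p) : dotp u v = u ⬝ᵥ v := rfl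

lemma l2_nonneg (u : Vec p) : 0 ≤ l2 u := Real.sqrt_nonneg _

lemma l2_sq (u : Vec p) : l2 u ^ 2 = ∑ i, u i ^ 2 :=
  Real.sq_sqrt (Finset.sum_nonneg fun i _ => sq_nonneg (u i))

lemma abs_dotp_le_l2_mul_l2 (u v : Vec p) : |dotp u v| ≤ l2 u * l2 v := by
  rw [l2, l2, ← Real.sqrt_mul (Finset.sum_nonneg fun i _ => sq_nonneg (u i)),
    ← Real.sqrt_sq_eq_abs]
  exact Real.sqrt_le_sqrt (Finset.sum_mul_sq_le_sq_mul_sq _ _ _)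

lemma abs_dotp_div_l2_le (u v : Vec p) : |dotp u v / l2 u| ≤ l2 v := by
  rw [abs_div, abs_of_nonneg (l2_nonneg u)]
  exact div_le_of_le_mul₀ (l2_nonneg u) (l2_nonneg v)
    ((abs_dotp_le_l2_mul_l2 u v).trans_eq (mul_comm _ _))

lemma abs_dotp_add_abs_dotp_le_l1 {x z : Vec p} (h : ∀ i, |x i| + |z i| ≤ 1) (u : Vec p) :
    |dotp x u| + |dotp z u| ≤ l1 u :=
  calc |dotp x u| + |dotp z u| ≤ ∑ i, |x i * u i| + ∑ i, |z i * u i| :=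
        add_le_add (Finset.abs_sum_le_sum_abs _ _) (Finset.abs_sum_le_sum_abs _ _)
    _ = ∑ i, (|x i| + |z i|) * |u i| := by
        simp only [← Finset.sum_add_distrib, abs_mul, add_mul]
    _ ≤ l1 u := Finset.sum_le_sum fun i _ => mul_le_of_le_one_left (abs_nonneg _) (h i)

lemma dotp_eq_zero_of_support_disjoint {z β : Vec p} (hz : ∀ i, β i ≠ 0 → z i = 0) :
    dotp z β = 0 :=
  Finset.sum_eq_zero fun i _ => by
    by_cases h : β i = 0
    · rw [h, mul_zero]
    · rw [hz i h, zero_mul]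

lemma abs_sign_add_abs_le_one {β z : Vec p} (hz : ∀ i, β i ≠ 0 → z i = 0)
    (hz₁ : ∀ i, |z i| ≤ 1) (i : Fin p) : |Real.sign (β i)| + |z i| ≤ 1 := by
  by_cases h : β i = 0
  · simpa [h] using hz₁ i
  · simpa [hz i h] using Real.abs_sign_le_one (β i)

lemma dotp_vecMulVec_add_smul_mulVec (c : ℝ) (w x y u v : Vec p) :
    dotp ((vecMulVec w w + c • (vecMulVec w x + vecMulVec y w)) *ᵥ u) v
      = dotp w u * dotp w v + c * (dotp x u * dotp w v + dotp w u * dotp y v) := by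
  simp only [dotp_eq_dotProduct, add_mulVec, smul_mulVec, vecMulVec_mulVec, op_smul_eq_smul,
    add_dotProduct, smul_dotProduct, smul_eq_mul]

variable {c : ℝ} (β : Vec p)

lemma dotp_normalize_add_smul_sign (u : Vec p) :
    dotp (fun i => β i / l2 β + c * Real.sign (β i)) u
      = dotp β u / l2 β + c * dotp (fun i => Real.sign (β i)) u := by
  simp only [dotp, add_mul, Finset.sum_add_distrib, Finset.sum_div, Finset.mul_sum,
    div_mul_eq_mul_div, mul_assoc]

lemma dotp_normalize_add_smul_sign_self :
    dotp (fun i => β i / l2 β + c * Real.sign (β i)) β = l2 β + c * l1 β := by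
  rw [dotp_normalize_add_smul_sign, l1]
  simp only [dotp, ← sq, Real.sign_mul_self_eq_abs, ← l2_sq]
  rw [sq, mul_self_div_self]

lemma abs_dotp_normalize_add_smul_sign_add_le (hc : 0 ≤ c) {z : Vec p}
    (hz : ∀ i, β i ≠ 0 → z i = 0) (hz₁ : ∀ i, |z i| ≤ 1) (u : Vec p) :
    |dotp (fun i => β i / l2 β + c * Real.sign (β i)) u| + c * |dotp z u|
      ≤ l2 u + c * l1 u :=
  calc _ ≤ |dotp β u / l2 β| + c * (|dotp (fun i => Real.sign (β i)) u| + |dotp z u|) := by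
        rw [dotp_normalize_add_smul_sign, mul_add]
        grw [abs_add_le, abs_mul, abs_of_nonneg hc]
        linarith
    _ ≤ l2 u + c * l1 u :=
        add_le_add (abs_dotp_div_l2_le β u) (mul_le_mul_of_nonneg_left
          (abs_dotp_add_abs_dotp_le_l1 (abs_sign_add_abs_le_one hz hz₁) u) hc)

end Vectors

theorem subgradient_case_one_general {p s : ℕ} (β : Vec p)
    (ut vt : Vec p)
    (hut_supp : ∀ i, β i ≠ 0 → ut i = 0) (hvt_supp : ∀ i, β i ≠ 0 → vt i = 0)
    (hut_inf : ∀ i, |ut i| ≤ 1) (hvt_inf : ∀ i, |vt i| ≤ 1) :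
    let w : Vec p := fun i => β i / l2 β + (Real.sqrt (s : ℝ))⁻¹ * Real.sign (β i)
    let W : Mat p := Matrix.vecMulVec w w
      + (Real.sqrt (s : ℝ))⁻¹ • (Matrix.vecMulVec w ut + Matrix.vecMulVec vt w)
    dotp (W.mulVec β) β = theta (s : ℝ) β β ∧
    ∀ u v : Vec p, dotp (W.mulVec u) v ≤ theta (s : ℝ) u v := by
  intro w W
  have hc : 0 ≤ (Real.sqrt (s : ℝ))⁻¹ := by positivity
  have hW : ∀ u v, dotp (W *ᵥ u) v = dotp w u * dotp w v
      + (Real.sqrt (s : ℝ))⁻¹ * (dotp ut u * dotp w v + dotp w u * dotp vt v) :=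
    dotp_vecMulVec_add_smul_mulVec _ _ _ _
  refine ⟨?_, fun u v => ?_⟩
  · rw [hW, dotp_eq_zero_of_support_disjoint hut_supp, dotp_eq_zero_of_support_disjoint hvt_supp,
      dotp_normalize_add_smul_sign_self, theta]
    ring
  · rw [hW]
    exact mul_add_mul_cross_le hc
      (abs_dotp_normalize_add_smul_sign_add_le β hc hut_supp hut_inf u)
      (abs_dotp_normalize_add_smul_sign_add_le β hc hvt_supp hvt_inf v)

/-- Lemma A.2, case 1. Perturbations of `w_β ⊗ w_β` by bounded off-support terms
are subgradients of the mixed atomic norm at `β ⊗ β`. -/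
theorem subgradient_case_one {p s : ℕ} (hs : 0 < s) (β : Vec p)
    (hβ : IsSparse s β) (hβ0 : β ≠ 0) (ut vt : Vec p)
    (hut_supp : ∀ i, β i ≠ 0 → ut i = 0) (hvt_supp : ∀ i, β i ≠ 0 → vt i = 0)
    (hut_inf : ∀ i, |ut i| ≤ 1) (hvt_inf : ∀ i, |vt i| ≤ 1) :
    let w : Vec p := fun i => β i / l2 β + (Real.sqrt (s : ℝ))⁻¹ * Real.sign (β i)
    let W : Mat p := Matrix.vecMulVec w w
      + (Real.sqrt (s : ℝ))⁻¹ • (Matrix.vecMulVec w ut + Matrix.vecMulVec vt w)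
    dotp (W.mulVec β) β = theta (s : ℝ) β β ∧
    ∀ u v : Vec p, dotp (W.mulVec u) v ≤ theta (s : ℝ) u v :=
  subgradient_case_one_general β ut vt hut_supp hvt_supp hut_inf hvt_inf
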